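/- Let σ_d > 0, let M̃ and Q̄ be integers with M̃ > Q̄ ≥ 0, and let (s_i)_{i∈ℕ} be centered square-integrable complex random variables with E[|s_i|²] = σ_d² for all i and E[s_{i₁} · conj(s_{i₂})] = 0 for i₁ ≠ i₂. Define the overlapping-block unitary DFT coefficients S_n[m] = Σ_{l=0}^{M̃−1} s_{n(M̃−Q̄)+l} · e^{−j2πlm/M̃}/√M̃. Then for every n ≥ 0 and every 0 ≤ m < M̃: (i) E[S_n[m] · conj(S_{n+1}[m])] = (Q̄ σ_d²/M̃) · e^{−j2π(M̃−Q̄)m/M̃}; (ii) E[|S_n[m]|²] = σ_d²; and hence (iii) the absolute correlation coefficient |E[S_n[m] · conj(S_{n+1}[m])]| / √(E[|S_n[m]|²] · E[|S_{n+1}[m]|²]) equals Q̄/M̃. -/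

import Mathlib

open MeasureTheory Complex ComplexConjugate
open scoped Real BigOperators

/-!
Expanding `E[(Σ_l s_{a+l} c_l) · conj(Σ_l' s_{a+d+l'} c_l')]` sesquilinearly, whiteness of `s`
kills every term except those with `l = l' + d`, so the correlation of two windows at offset `d`
is `σ_d² Σ_{l' < M̃-d} c_{l'+d} conj(c_l')`. For the unitary DFT kernel each such product equals
`e^{-j2πdm/M̃}/M̃`; adjacent blocks (`d = M̃ - Q̄`) share `Q̄` samples, and `d = 0` gives the power.
-/

section
variable {Ω : Type*} [MeasurableSpace Ω] {P : Measure Ω}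

lemma integrable_mul_conj {f g : Ω → ℂ} (hf : MemLp f 2 P) (hg : MemLp g 2 P) :
    Integrable (fun ω => f ω * conj (g ω)) P :=
  hf.integrable_mul (q := 2) hg.star

lemma integral_mul_conj_self (f : Ω → ℂ) :
    ∫ ω, f ω * conj (f ω) ∂P = ((∫ ω, ‖f ω‖ ^ 2 ∂P : ℝ) : ℂ) := by
  simp_rw [mul_conj']
  exact_mod_cast (integral_ofReal (𝕜 := ℂ)).symm

lemma integral_sum_mul_conj_sum {ι κ : Type*} (A : Finset ι) (B : Finset κ)
    {f : ι → Ω → ℂ} {g : κ → Ω → ℂ} (hf : ∀ i, MemLp (f i) 2 P) (hg : ∀ k, MemLp (g k) 2 P)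
    (a : ι → ℂ) (b : κ → ℂ) :
    ∫ ω, (∑ i ∈ A, f i ω * a i) * conj (∑ k ∈ B, g k ω * b k) ∂P
      = ∑ i ∈ A, ∑ k ∈ B, (∫ ω, f i ω * conj (g k ω) ∂P) * (a i * conj (b k)) := by
  have hint : ∀ i k, Integrable (fun ω => f i ω * conj (g k ω) * (a i * conj (b k))) P :=
    fun i k => (integrable_mul_conj (hf i) (hg k)).mul_const _
  have expand : ∀ ω, (∑ i ∈ A, f i ω * a i) * conj (∑ k ∈ B, g k ω * b k)
      = ∑ i ∈ A, ∑ k ∈ B, f i ω * conj (g k ω) * (a i * conj (b k)) := fun ω => by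
    simp only [map_sum, map_mul, Finset.sum_mul_sum]
    exact Finset.sum_congr rfl fun i _ => Finset.sum_congr rfl fun k _ => by ring
  simp_rw [expand]
  rw [integral_finsetSum _ fun i _ => integrable_finsetSum _ fun k _ => hint i k]
  simp_rw [integral_finsetSum _ fun k _ => hint _ k, integral_mul_const]

lemma integral_mul_conj_eq_ite_of_uncorrelated {s : ℕ → Ω → ℂ} {v : ℝ}
    (hvar : ∀ i, ∫ ω, ‖s i ω‖ ^ 2 ∂P = v)
    (huncorr : ∀ i₁ i₂ : ℕ, i₁ ≠ i₂ → ∫ ω, s i₁ ω * conj (s i₂ ω) ∂P = 0) (i j : ℕ) :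
    ∫ ω, s i ω * conj (s j ω) ∂P = if i = j then (v : ℂ) else 0 := by
  split_ifs with h
  · rw [h, integral_mul_conj_self, hvar]
  · exact huncorr i j h

lemma integral_window_mul_conj_shifted_window {s : ℕ → Ω → ℂ} (hL2 : ∀ i, MemLp (s i) 2 P)
    {v : ℂ} (hcov : ∀ i j, ∫ ω, s i ω * conj (s j ω) ∂P = if i = j then v else 0)
    (a d M : ℕ) (c : ℕ → ℂ) :
    ∫ ω, (∑ l ∈ Finset.range M, s (a + l) ω * c l) *
        conj (∑ l ∈ Finset.range M, s (a + d + l) ω * c l) ∂P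
      = v * ∑ l ∈ Finset.range (M - d), c (l + d) * conj (c l) := by
  have hoverlap : (Finset.range M).filter (fun l => l + d ∈ Finset.range M)
      = Finset.range (M - d) := by
    ext l; simp only [Finset.mem_filter, Finset.mem_range]; omega
  rw [integral_sum_mul_conj_sum _ _ (fun _ => hL2 _) (fun _ => hL2 _), Finset.sum_comm,
    ← hoverlap, Finset.sum_filter, Finset.mul_sum]
  refine Finset.sum_congr rfl fun l _ => ?_
  simp_rw [hcov, show ∀ k, (a + k = a + d + l) ↔ (k = l + d) from fun k => by omega, ite_mul,
    zero_mul, Finset.sum_ite_eq']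
  split_ifs <;> simp
end

noncomputable def dftKernel (M m l : ℕ) : ℂ := exp (-(I * 2 * π * l * m / M)) / Real.sqrt M

lemma dftKernel_mul_conj (M m x y : ℕ) :
    dftKernel M m x * conj (dftKernel M m y) = exp (-(I * 2 * π * ((x : ℂ) - y) * m / M)) / M := by
  have hconj : conj (exp (-(I * 2 * π * y * m / M))) = exp (I * 2 * π * y * m / M) := by
    rw [← exp_conj]; simp [map_ofNat, neg_div]
  rw [dftKernel, dftKernel, map_div₀, hconj, conj_ofReal, div_mul_div_comm, ← exp_add,
    ← ofReal_mul, Real.mul_self_sqrt (Nat.cast_nonneg M), ofReal_natCast]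
  ring_nf

lemma sum_dftKernel_shift_mul_conj (M m d N : ℕ) :
    ∑ l ∈ Finset.range N, dftKernel M m (l + d) * conj (dftKernel M m l)
      = N * exp (-(I * 2 * π * d * m / M)) / M := by
  simp_rw [dftKernel_mul_conj, Nat.cast_add, add_sub_cancel_left, Finset.sum_const,
    Finset.card_range, nsmul_eq_mul, mul_div_assoc]

lemma norm_exp_neg_two_pi_I_mul_div (d m M : ℕ) :
    ‖exp (-(I * 2 * π * d * m / M))‖ = 1 := by
  rw [norm_exp]
  simp

theorem overlapping_block_dft_correlation_general
    {Ω : Type*} [MeasurableSpace Ω] (P : Measure Ω)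
    (Mt Qb : ℕ) (hQb : Qb < Mt) (σd : ℝ) (hσd : 0 < σd)
    (s : ℕ → Ω → ℂ)
    (hL2 : ∀ i, MemLp (s i) 2 P)
    (hvar : ∀ i, ∫ ω, (‖s i ω‖ : ℝ) ^ 2 ∂P = σd ^ 2)
    (huncorr : ∀ i₁ i₂ : ℕ, i₁ ≠ i₂ → ∫ ω, s i₁ ω * conj (s i₂ ω) ∂P = 0)
    (S : ℕ → ℕ → Ω → ℂ)
    (hS : ∀ n m ω, S n m ω = ∑ l ∈ Finset.range Mt,
      s (n * (Mt - Qb) + l) ω * Complex.exp (-(Complex.I * 2 * π * l * m / Mt)) / Real.sqrt Mt) :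
    ∀ (n : ℕ) (m : ℕ), m < Mt →
      (∫ ω, S n m ω * conj (S (n + 1) m ω) ∂P =
        (((Qb : ℝ) * σd ^ 2 / Mt : ℝ) : ℂ) *
          Complex.exp (-(Complex.I * 2 * π * ((Mt : ℂ) - (Qb : ℂ)) * m / Mt))) ∧
      (∫ ω, (‖S n m ω‖ : ℝ) ^ 2 ∂P = σd ^ 2) ∧
      (‖∫ ω, S n m ω * conj (S (n + 1) m ω) ∂P‖ /
          Real.sqrt ((∫ ω, (‖S n m ω‖ : ℝ) ^ 2 ∂P) * ∫ ω, (‖S (n + 1) m ω‖ : ℝ) ^ 2 ∂P) =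
        (Qb : ℝ) / Mt) := by
  intro n m _
  have hM : (Mt : ℂ) ≠ 0 := by exact_mod_cast (Nat.zero_lt_of_lt hQb).ne'
  have hcov := integral_mul_conj_eq_ite_of_uncorrelated hvar huncorr
  have hblock : ∀ n, S n m = fun ω =>
      ∑ l ∈ Finset.range Mt, s (n * (Mt - Qb) + l) ω * dftKernel Mt m l := fun n =>
    funext fun ω => by simp only [hS, mul_div_assoc, dftKernel]
  have hpower : ∀ n, ∫ ω, ‖S n m ω‖ ^ 2 ∂P = σd ^ 2 := fun n => by
    apply ofReal_injective
    rw [← integral_mul_conj_self, hblock]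
    have h := integral_window_mul_conj_shifted_window hL2 hcov (n * (Mt - Qb)) 0 Mt
      (dftKernel Mt m)
    rw [sum_dftKernel_shift_mul_conj] at h
    simpa [hM] using h
  have hnext : (n + 1) * (Mt - Qb) = n * (Mt - Qb) + (Mt - Qb) := by ring
  have hcross : ∫ ω, S n m ω * conj (S (n + 1) m ω) ∂P =
      (((Qb : ℝ) * σd ^ 2 / Mt : ℝ) : ℂ) *
        exp (-(I * 2 * π * ((Mt : ℂ) - (Qb : ℂ)) * m / Mt)) := by
    rw [hblock, hblock, hnext, integral_window_mul_conj_shifted_window hL2 hcov,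
      sum_dftKernel_shift_mul_conj, Nat.sub_sub_self hQb.le, Nat.cast_sub hQb.le]
    push_cast
    ring
  refine ⟨hcross, hpower n, ?_⟩
  rw [hcross, hpower, hpower, norm_mul, norm_real, ← Nat.cast_sub hQb.le,
    norm_exp_neg_two_pi_I_mul_div, Real.sqrt_mul_self (sq_nonneg σd),
    Real.norm_of_nonneg (by positivity)]
  field_simp

/-- Correlation of the unitary DFTs of adjacent overlapping sub-blocks (Lemma 2 /
Appendix B of the paper): for a centered white stream `(s_i)` of power `σ_d²` and
sub-blocks of length `M̃` overlapping by `Q̄` samples, with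
`S_n[m] = Σ_{l<M̃} s_{n(M̃−Q̄)+l} e^{−j2πlm/M̃}/√M̃`, one has
(i) `E[S_n[m] conj(S_{n+1}[m])] = (Q̄σ_d²/M̃)·e^{−j2π(M̃−Q̄)m/M̃}`,
(ii) `E[|S_n[m]|²] = σ_d²`, and (iii) the absolute correlation coefficient is `Q̄/M̃`. -/
theorem overlapping_block_dft_correlation
    {Ω : Type*} [MeasurableSpace Ω] (P : Measure Ω) [IsProbabilityMeasure P]
    (Mt Qb : ℕ) (hQb : Qb < Mt) (σd : ℝ) (hσd : 0 < σd)
    (s : ℕ → Ω → ℂ)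
    (hL2 : ∀ i, MemLp (s i) 2 P)
    (hcent : ∀ i, ∫ ω, s i ω ∂P = 0)
    (hvar : ∀ i, ∫ ω, (‖s i ω‖ : ℝ) ^ 2 ∂P = σd ^ 2)
    (huncorr : ∀ i₁ i₂ : ℕ, i₁ ≠ i₂ → ∫ ω, s i₁ ω * conj (s i₂ ω) ∂P = 0)
    (S : ℕ → ℕ → Ω → ℂ)
    (hS : ∀ n m ω, S n m ω = ∑ l ∈ Finset.range Mt,
      s (n * (Mt - Qb) + l) ω * Complex.exp (-(Complex.I * 2 * π * l * m / Mt)) / Real.sqrt Mt) :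
    ∀ (n : ℕ) (m : ℕ), m < Mt →
      (∫ ω, S n m ω * conj (S (n + 1) m ω) ∂P =
        (((Qb : ℝ) * σd ^ 2 / Mt : ℝ) : ℂ) *
          Complex.exp (-(Complex.I * 2 * π * ((Mt : ℂ) - (Qb : ℂ)) * m / Mt))) ∧
      (∫ ω, (‖S n m ω‖ : ℝ) ^ 2 ∂P = σd ^ 2) ∧
      (‖∫ ω, S n m ω * conj (S (n + 1) m ω) ∂P‖ /
          Real.sqrt ((∫ ω, (‖S n m ω‖ : ℝ) ^ 2 ∂P) * ∫ ω, (‖S (n + 1) m ω‖ : ℝ) ^ 2 ∂P) =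
        (Qb : ℝ) / Mt) :=
  overlapping_block_dft_correlation_general P Mt Qb hQb σd hσd s hL2 hvar huncorr S hS
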